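/- Let (Γ, m, E, s) and (Γ', m', E', s') be groupoids, f : E' → E a map, and g : Γ ×_f E' → Γ' a map satisfying conditions (a)–(d). Then the relation h with Gr(h) := {(g(x, e'), x) : (x, e') ∈ Γ ×_f E'} ⊆ Γ' × Γ is a morphism of groupoids from Γ to Γ'. -/
import Mathlib


/-- A groupoid in the sense of Zakrzewski: `m z x y` means `(z; x, y) ∈ m`,
`E` is the set of identities and `s` is the inverse map. -/
def IsZGroupoid {Γ : Type*} (m : Γ → Γ → Γ → Prop) (E : Set Γ) (s : Γ → Γ) : Prop :=
  (∀ x, s (s x) = x) ∧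
  (∀ x y w z, (∃ u, m u x y ∧ m z u w) ↔ (∃ v, m v y w ∧ m z x v)) ∧
  (∀ z x, (∃ a ∈ E, m z a x) ↔ z = x) ∧
  (∀ z x, (∃ a ∈ E, m z x a) ↔ z = x) ∧
  (∀ z x y, m (s z) x y ↔ m z (s y) (s x)) ∧
  (∀ x, ∃ z, m z (s x) x) ∧
  (∀ x z, m z (s x) x → z ∈ E)

/-- A morphism of Zakrzewski groupoids from `(Γ, m, E, s)` to `(Γ', m', E', s')`:
`h y x` means `(y, x) ∈ Gr(h) ⊆ Γ' × Γ`. -/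
def IsZMorphism {Γ Γ' : Type*} (m : Γ → Γ → Γ → Prop) (E : Set Γ) (s : Γ → Γ)
    (m' : Γ' → Γ' → Γ' → Prop) (E' : Set Γ') (s' : Γ' → Γ')
    (h : Γ' → Γ → Prop) : Prop :=
  (∀ y' x₁ x₂, (∃ x, m x x₁ x₂ ∧ h y' x) ↔ (∃ y₁ y₂, h y₁ x₁ ∧ h y₂ x₂ ∧ m' y' y₁ y₂)) ∧
  (∀ y' x, h y' (s x) ↔ h (s' y') x) ∧
  {y' | ∃ a ∈ E, h y' a} = E'

section Aux

variable {Γ : Type*} {m : Γ → Γ → Γ → Prop} {E : Set Γ} {s : Γ → Γ} {eL eR : Γ → Γ}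

lemma Z.unitL (hG : IsZGroupoid m E s) (hL : ∀ x, eL x ∈ E ∧ m x (eL x) x)
    {t w y : Γ} (hw : w ∈ E) (h : m t w y) : t = y ∧ w = eL y := by
  have hty : t = y := (hG.2.2.1 t y).mp ⟨w, hw, h⟩
  subst hty
  obtain ⟨u, hu1, _⟩ := (hG.2.1 w (eL t) t t).mpr ⟨t, (hL t).2, h⟩
  have h1 : u = w := (hG.2.2.2.1 u w).mp ⟨eL t, (hL t).1, hu1⟩
  have h2 : u = eL t := (hG.2.2.1 u (eL t)).mp ⟨w, hw, hu1⟩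
  exact ⟨rfl, h1.symm.trans h2⟩

lemma Z.unitR (hG : IsZGroupoid m E s) (hR : ∀ x, eR x ∈ E ∧ m x x (eR x))
    {t w y : Γ} (hw : w ∈ E) (h : m t y w) : t = y ∧ w = eR y := by
  have hty : t = y := (hG.2.2.2.1 t y).mp ⟨w, hw, h⟩
  subst hty
  obtain ⟨v, hv1, _⟩ := (hG.2.1 t w (eR t) t).mp ⟨t, h, (hR t).2⟩
  have h1 : v = eR t := (hG.2.2.1 v (eR t)).mp ⟨w, hw, hv1⟩
  have h2 : v = w := (hG.2.2.2.1 v w).mp ⟨eR t, (hR t).1, hv1⟩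
  exact ⟨rfl, h2.symm.trans h1⟩

lemma Z.unitsOf (hG : IsZGroupoid m E s) (hL : ∀ x, eL x ∈ E ∧ m x (eL x) x)
    (hR : ∀ x, eR x ∈ E ∧ m x x (eR x)) {z x y : Γ} (h : m z x y) :
    eL z = eL x ∧ eR z = eR y ∧ eR x = eL y := by
  refine ⟨?_, ?_, ?_⟩
  · obtain ⟨v, hv1, hv2⟩ := (hG.2.1 (eL x) x y z).mp ⟨x, (hL x).2, h⟩
    obtain ⟨h1, h2⟩ := Z.unitL hG hL (hL x).1 hv2
    rw [h1, ← h2]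
  · obtain ⟨u, hu1, hu2⟩ := (hG.2.1 x y (eR y) z).mpr ⟨y, (hR y).2, h⟩
    obtain ⟨h1, h2⟩ := Z.unitR hG hR (hR y).1 hu2
    rw [h1, ← h2]
  · obtain ⟨v, hv1, hv2⟩ := (hG.2.1 x (eR x) y z).mp ⟨x, (hR x).2, h⟩
    exact (Z.unitL hG hL (hR x).1 hv1).2

lemma Z.unit_mm (hG : IsZGroupoid m E s) {a : Γ} (ha : a ∈ E) : m a a a := by
  obtain ⟨b, hb, hab⟩ := (hG.2.2.1 a a).mpr rfl
  have hba : a = b := (hG.2.2.2.1 a b).mp ⟨a, ha, hab⟩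
  rw [← hba] at hab
  exact hab

lemma Z.unit_eL (hG : IsZGroupoid m E s) (hL : ∀ x, eL x ∈ E ∧ m x (eL x) x)
    {a : Γ} (ha : a ∈ E) : eL a = a :=
  ((Z.unitL hG hL ha (Z.unit_mm hG ha)).2).symm

lemma Z.unit_eR (hG : IsZGroupoid m E s) (hR : ∀ x, eR x ∈ E ∧ m x x (eR x))
    {a : Γ} (ha : a ∈ E) : eR a = a :=
  ((Z.unitR hG hR ha (Z.unit_mm hG ha)).2).symm

lemma Z.s_units (hG : IsZGroupoid m E s) (hL : ∀ x, eL x ∈ E ∧ m x (eL x) x)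
    (hR : ∀ x, eR x ∈ E ∧ m x x (eR x)) (x : Γ) :
    eL (s x) = eR x ∧ eR (s x) = eL x := by
  obtain ⟨w, hw⟩ := hG.2.2.2.2.2.1 x
  have hwE : w ∈ E := hG.2.2.2.2.2.2 x w hw
  have hu := Z.unitsOf hG hL hR hw
  constructor
  · rw [← hu.1, Z.unit_eL hG hL hwE, ← hu.2.1, Z.unit_eR hG hR hwE]
  · exact hu.2.2

lemma Z.unit_sfix (hG : IsZGroupoid m E s) (hL : ∀ x, eL x ∈ E ∧ m x (eL x) x)
    (hR : ∀ x, eR x ∈ E ∧ m x x (eR x)) {a : Γ} (ha : a ∈ E) : s a = a := by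
  obtain ⟨w, hw⟩ := hG.2.2.2.2.2.1 a
  have hwE : w ∈ E := hG.2.2.2.2.2.2 a w hw
  have hu := Z.unitsOf hG hL hR hw
  have hwa : w = a := by rw [← Z.unit_eR hG hR hwE, hu.2.1, Z.unit_eR hG hR ha]
  rw [hwa] at hw
  exact ((hG.2.2.2.1 a (s a)).mp ⟨a, ha, hw⟩).symm

lemma Z.uniq (hG : IsZGroupoid m E s) (hL : ∀ x, eL x ∈ E ∧ m x (eL x) x)
    (hR : ∀ x, eR x ∈ E ∧ m x x (eR x)) (mul : Γ → Γ → Γ)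
    (hmul : ∀ x y, eR x = eL y → m (mul x y) x y)
    {z z' x y : Γ} (h : m z x y) (h' : m z' x y) : z = z' := by
  have hs := Z.s_units hG hL hR x
  have hcomp : eR (s x) = eL z' := by
    rw [hs.2, ← (Z.unitsOf hG hL hR h').1]
  have ht : m (mul (s x) z') (s x) z' := hmul _ _ hcomp
  obtain ⟨u, hu1, hu2⟩ := (hG.2.1 (s x) x y (mul (s x) z')).mpr ⟨z', h', ht⟩
  have huE : u ∈ E := hG.2.2.2.2.2.2 x u hu1
  have hty : mul (s x) z' = y := (Z.unitL hG hL huE hu2).1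
  rw [hty] at ht
  obtain ⟨u2, hu21, hu22⟩ := (hG.2.1 x (s x) z' z).mpr ⟨y, ht, h⟩
  have hu2E : u2 ∈ E := by
    have hss : m u2 (s (s x)) (s x) := by rw [hG.1]; exact hu21
    exact hG.2.2.2.2.2.2 (s x) u2 hss
  exact (Z.unitL hG hL hu2E hu22).1

end Aux

/-- If `f : E' → E` and `g : Γ ×_f E' → Γ'` satisfy conditions (a)–(d), then the
relation with graph `{(g(x, e'), x) : (x, e') ∈ Γ ×_f E'}` is a morphism `Γ → Γ'`.
Here `mul`/`mul'` denote the (unique) groupoid products `x·y` on composable pairs. -/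
theorem stmt8 {Γ Γ' : Type*}
    (m : Γ → Γ → Γ → Prop) (E : Set Γ) (s : Γ → Γ) (hG : IsZGroupoid m E s)
    (m' : Γ' → Γ' → Γ' → Prop) (E' : Set Γ') (s' : Γ' → Γ') (hG' : IsZGroupoid m' E' s')
    (eL eR : Γ → Γ)
    (hL : ∀ x, eL x ∈ E ∧ m x (eL x) x) (hR : ∀ x, eR x ∈ E ∧ m x x (eR x))
    (eL' eR' : Γ' → Γ')
    (hL' : ∀ y, eL' y ∈ E' ∧ m' y (eL' y) y) (hR' : ∀ y, eR' y ∈ E' ∧ m' y y (eR' y))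
    (mul : Γ → Γ → Γ) (hmul : ∀ x y, eR x = eL y → m (mul x y) x y)
    (mul' : Γ' → Γ' → Γ') (hmul' : ∀ x y, eR' x = eL' y → m' (mul' x y) x y)
    (f : Γ' → Γ) (hf : ∀ e' ∈ E', f e' ∈ E)
    (g : Γ → Γ' → Γ')
    (hga : ∀ x, (∃ e' ∈ E', eR x = f e') → ∃ e'' ∈ E', eL x = f e'')
    (hgb : ∀ x e', e' ∈ E' → eR x = f e' → eR' (g x e') = e')
    (hgc : ∀ x e', e' ∈ E' → eR x = f e' →
        eR (s x) = f (eL' (g x e')) ∧ s' (g x e') = g (s x) (eL' (g x e')))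
    (hgd : ∀ x e' x₁, e' ∈ E' → eR x = f e' → eR x₁ = eL x →
        g (mul x₁ x) e' = mul' (g x₁ (eL' (g x e'))) (g x e')) :
    IsZMorphism m E s m' E' s' (fun y x => ∃ e' ∈ E', eR x = f e' ∧ y = g x e') := by
  have unitsOf := fun {z x y : Γ} (h : m z x y) => Z.unitsOf hG hL hR h
  have unitsOf' := fun {z x y : Γ'} (h : m' z x y) => Z.unitsOf hG' hL' hR' h
  have s_units := Z.s_units hG hL hR
  have uniq := fun {z z' x y : Γ} (h : m z x y) (h' : m z' x y) =>
    Z.uniq hG hL hR mul hmul h h'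
  have uniq' := fun {z z' x y : Γ'} (h : m' z x y) (h' : m' z' x y) =>
    Z.uniq hG' hL' hR' mul' hmul' h h'
  have mul_eq : ∀ {z x y : Γ}, m z x y → z = mul x y := fun {z x y} h =>
    uniq h (hmul x y (unitsOf h).2.2)
  -- the ⊆ direction of (iii), proved once so it can be reused
  have hsub : ∀ a ∈ E, ∀ e' ∈ E', eR a = f e' → g a e' ∈ E' := by
    intro a ha e' he' hfe
    have haL : eL a = a := Z.unit_eL hG hL ha
    have haR : eR a = a := Z.unit_eR hG hR ha
    have ham : m a a a := Z.unit_mm hG ha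
    have haa : a = mul a a := mul_eq ham
    have hsa : s a = a := Z.unit_sfix hG hL hR ha
    have hcc := hgc a e' he' hfe
    rw [hsa] at hcc
    have hfa2 : eR a = f (eL' (g a e')) := hcc.1
    have hgdd := hgd a e' a he' hfe (by rw [haR, haL])
    rw [← haa] at hgdd
    have hs' : s' (g a e') = g a (eL' (g a e')) := hcc.2
    have hR2 : eR' (g a (eL' (g a e'))) = eL' (g a e') := hgb a _ (hL' _).1 hfa2
    have hm2 : m' (mul' (g a (eL' (g a e'))) (g a e')) (g a (eL' (g a e'))) (g a e') :=
      hmul' _ _ hR2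
    rw [← hgdd, ← hs'] at hm2
    exact hG'.2.2.2.2.2.2 (g a e') (g a e') hm2
  refine ⟨?_, ?_, ?_⟩
  · -- (i)
    intro y' x₁ x₂
    constructor
    · rintro ⟨x, hx, e', he', hfe, rfl⟩
      have hu := unitsOf hx
      have he2 : eR x₂ = f e' := by rw [← hu.2.1]; exact hfe
      have hc := hgc x₂ e' he' he2
      have he1 : eR x₁ = f (eL' (g x₂ e')) := by
        rw [hu.2.2, ← (s_units x₂).2]; exact hc.1
      have hx_eq : x = mul x₁ x₂ := mul_eq hx
      have hgde := hgd x₂ e' x₁ he' he2 hu.2.2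
      refine ⟨g x₁ (eL' (g x₂ e')), g x₂ e',
        ⟨eL' (g x₂ e'), (hL' _).1, he1, rfl⟩, ⟨e', he', he2, rfl⟩, ?_⟩
      have hR2 : eR' (g x₁ (eL' (g x₂ e'))) = eL' (g x₂ e') := hgb x₁ _ (hL' _).1 he1
      have := hmul' _ _ hR2
      rw [hx_eq, hgde]
      exact this
    · rintro ⟨y₁, y₂, ⟨e₁, he₁, hf₁, rfl⟩, ⟨e₂, he₂, hf₂, rfl⟩, hm'⟩
      have hu' := unitsOf' hm'
      have hb1 : eR' (g x₁ e₁) = e₁ := hgb x₁ e₁ he₁ hf₁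
      have hc2 := hgc x₂ e₂ he₂ hf₂
      have he12 : e₁ = eL' (g x₂ e₂) := by rw [← hb1]; exact hu'.2.2
      have hcomp : eR x₁ = eL x₂ := by
        rw [hf₁, he12, ← hc2.1, (s_units x₂).2]
      have hx : m (mul x₁ x₂) x₁ x₂ := hmul _ _ hcomp
      refine ⟨mul x₁ x₂, hx, e₂, he₂, ?_, ?_⟩
      · rw [(unitsOf hx).2.1]; exact hf₂
      · have hgde := hgd x₂ e₂ x₁ he₂ hf₂ hcomp
        rw [← he12] at hgde
        have hmm : m' (mul' (g x₁ e₁) (g x₂ e₂)) (g x₁ e₁) (g x₂ e₂) :=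
          hmul' _ _ (by rw [hb1, he12])
        rw [hgde]
        exact uniq' hm' hmm
  · -- (ii)
    intro y' x
    constructor
    · rintro ⟨e', he', hfe, rfl⟩
      have hc := hgc (s x) e' he' hfe
      rw [hG.1] at hc
      exact ⟨eL' (g (s x) e'), (hL' _).1, hc.1, hc.2.symm ▸ rfl⟩
    · rintro ⟨e'', he'', hfe, hy⟩
      have hc := hgc x e'' he'' hfe
      refine ⟨eL' (g x e''), (hL' _).1, hc.1, ?_⟩
      rw [← hc.2, ← hy]
      exact (hG'.1 y').symm
  · -- (iii)
    ext y'
    simp only [Set.mem_setOf_eq]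
    constructor
    · rintro ⟨a, ha, e', he', hfe, rfl⟩
      exact hsub a ha e' he' hfe
    · intro he'
      have hfE : f y' ∈ E := hf y' he'
      have h1 : eR (f y') = f y' := Z.unit_eR hG hR hfE
      refine ⟨f y', hfE, y', he', h1, ?_⟩
      have hmem : g (f y') y' ∈ E' := hsub (f y') hfE y' he' h1
      have h2 : eR' (g (f y') y') = g (f y') y' := Z.unit_eR hG' hR' hmem
      rw [← h2, hgb (f y') y' he' h1]
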